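/- arXiv:1708.02513 — 3 statements merged into one kernel-verified Lean document; each statement's English description precedes it below -/
import Mathlib

section
/- Let ι be a finite index set, let k : ι → ι → ℝ satisfy k i j ≥ 0 whenever i ≠ j, let s : ι → ℝ, and let n : ι → EuclideanSpace ℝ (Fin d) satisfy ‖n i‖ ≥ 1 for all i. Write n̂ i := (‖n i‖)⁻¹ • n i. Then ∑_{i,j} k i j · ((s i)² + (s j)²)/2 · ‖n i − n j‖² ≥ ∑_{i,j} k i j · ((s i)² + (s j)²)/2 · ‖n̂ i − n̂ j‖². -/
/-!
Writing `a = r • u`, `b = t • v` with `u`, `v` unit vectors, one has the identity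
`‖a - b‖² = (r - t)² + r t ‖u - v‖²`, so radial projection onto the unit sphere is
1-Lipschitz on the vectors of norm `≥ 1`. Each off-diagonal term of the form therefore
decreases, since its weight `k i j (s i² + s j²) / 2` is nonnegative, and the diagonal
terms vanish on both sides.
-/

section RadialProjection

variable {E : Type*} [NormedAddCommGroup E] [InnerProductSpace ℝ E]

theorem norm_smul_sub_smul_sq_of_norm_eq_one {u v : E} (hu : ‖u‖ = 1) (hv : ‖v‖ = 1)
    (r t : ℝ) : ‖r • u - t • v‖ ^ 2 = (r - t) ^ 2 + r * t * ‖u - v‖ ^ 2 := by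
  simp only [norm_sub_sq_real, norm_smul, real_inner_smul_left, real_inner_smul_right,
    Real.norm_eq_abs, mul_pow, sq_abs, hu, hv]
  ring

theorem norm_inv_norm_smul_sub_le {a b : E} (h : 1 ≤ ‖a‖ * ‖b‖) :
    ‖‖a‖⁻¹ • a - ‖b‖⁻¹ • b‖ ≤ ‖a - b‖ := by
  have ha : a ≠ 0 := by rintro rfl; simp at h; linarith
  have hb : b ≠ 0 := by rintro rfl; simp at h; linarith
  have key : ‖a - b‖ ^ 2 = (‖a‖ - ‖b‖) ^ 2 + ‖a‖ * ‖b‖ * ‖‖a‖⁻¹ • a - ‖b‖⁻¹ • b‖ ^ 2 := by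
    conv_lhs => rw [← smul_inv_smul₀ (norm_ne_zero_iff.2 ha) a,
      ← smul_inv_smul₀ (norm_ne_zero_iff.2 hb) b]
    exact norm_smul_sub_smul_sq_of_norm_eq_one (norm_smul_inv_norm ha)
      (norm_smul_inv_norm hb) _ _
  refine le_of_sq_le_sq ?_ (norm_nonneg _)
  nlinarith [sq_nonneg (‖a‖ - ‖b‖), sq_nonneg ‖‖a‖⁻¹ • a - ‖b‖⁻¹ • b‖]

end RadialProjection

/-- Inequality (4.8) of Lemma 4.2 (nodal form): with nonnegative off-diagonal stiffness
coefficients, replacing nodal director values of norm `≥ 1` by their normalizations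
does not increase the discrete Ericksen form. -/
theorem ericksen_form_monotone {d : ℕ} {ι : Type*} [Fintype ι]
    (k : ι → ι → ℝ) (hk : ∀ i j, i ≠ j → 0 ≤ k i j)
    (s : ι → ℝ)
    (n : ι → EuclideanSpace ℝ (Fin d)) (hn : ∀ i, 1 ≤ ‖n i‖) :
    ∑ i, ∑ j, k i j * (((s i) ^ 2 + (s j) ^ 2) / 2) *
        ‖(‖n i‖)⁻¹ • n i - (‖n j‖)⁻¹ • n j‖ ^ 2 ≤
      ∑ i, ∑ j, k i j * (((s i) ^ 2 + (s j) ^ 2) / 2) * ‖n i - n j‖ ^ 2 := by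
  refine Finset.sum_le_sum fun i _ => Finset.sum_le_sum fun j _ => ?_
  rcases eq_or_ne i j with rfl | hij
  · simp
  · have hweight : 0 ≤ k i j * (((s i) ^ 2 + (s j) ^ 2) / 2) :=
      mul_nonneg (hk i j hij) (by positivity)
    have hproj := norm_inv_norm_smul_sub_le (one_le_mul_of_one_le_of_one_le (hn i) (hn j))
    exact mul_le_mul_of_nonneg_left (pow_le_pow_left₀ (norm_nonneg _) hproj 2) hweight
end

section
/- Let ι be a finite index set, let k : ι → ι → ℝ satisfy k i j ≥ 0 whenever i ≠ j, let κ > 0, let s : ι → ℝ, and let n : ι → EuclideanSpace ℝ (Fin d) satisfy ‖n i‖ = 1 for all i. Define u i := (s i) • (n i) and E := (κ/2) ∑_{i,j} k i j (s i − s j)² + (1/2) ∑_{i,j} k i j ((s i)² + (s j)²)/2 · ‖n i − n j‖². Then E ≥ min κ 1 · (1/2) ∑_{i,j} k i j ‖u i − u j‖² and E ≥ min κ 1 · (1/2) ∑_{i,j} k i j (s i − s j)²; in particular E ≥ min κ 1 · max( (1/2) ∑_{i,j} k i j ‖u i − u j‖², (1/2) ∑_{i,j} k i j (s i − s j)² ).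 -/
/-!
For unit vectors `x, y` one has `‖a • x - b • y‖² = (a - b)² + a b ‖x - y‖²`, and `a b ≤ (a² + b²)/2`.
Since the weights `k i j` are nonnegative off the diagonal and every summand vanishes on it, this
bounds `∑ k i j ‖u i - u j‖²` by the sum of the two parts of the Ericksen energy. Both that sum and
`∑ k i j (s i - s j)²` are thus at most the sum of the two (nonnegative) parts, and weighting the
parts by `κ` and `1` costs at most the factor `min κ 1`.
-/

open Finset

section UnitVectors

variable {E : Type*} [NormedAddCommGroup E] [InnerProductSpace ℝ E] {x y : E}

theorem norm_smul_sub_smul_sq_of_norm_eq_one_s5 (hx : ‖x‖ = 1) (hy : ‖y‖ = 1) (a b : ℝ) :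
    ‖a • x - b • y‖ ^ 2 = (a - b) ^ 2 + a * b * ‖x - y‖ ^ 2 := by
  rw [norm_sub_sq_real, norm_sub_sq_real, norm_smul, norm_smul, real_inner_smul_left,
    real_inner_smul_right, hx, hy, Real.norm_eq_abs, Real.norm_eq_abs, mul_pow, mul_pow, sq_abs,
    sq_abs]
  ring

theorem norm_smul_sub_smul_sq_le_of_norm_eq_one (hx : ‖x‖ = 1) (hy : ‖y‖ = 1) (a b : ℝ) :
    ‖a • x - b • y‖ ^ 2 ≤ (a - b) ^ 2 + (a ^ 2 + b ^ 2) / 2 * ‖x - y‖ ^ 2 := by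
  rw [norm_smul_sub_smul_sq_of_norm_eq_one_s5 hx hy]
  have hab : a * b ≤ (a ^ 2 + b ^ 2) / 2 := by linarith [two_mul_le_add_sq a b]
  gcongr

end UnitVectors

section OffDiagonalWeights

variable {ι : Type*} [Fintype ι] {k : ι → ι → ℝ}

theorem sum_sum_mul_le_sum_sum_mul_of_offDiag (hk : ∀ i j, i ≠ j → 0 ≤ k i j)
    {f g : ι → ι → ℝ} (hfg : ∀ i j, i ≠ j → f i j ≤ g i j) (hdiag : ∀ i, f i i = g i i) :
    ∑ i, ∑ j, k i j * f i j ≤ ∑ i, ∑ j, k i j * g i j := by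
  refine sum_le_sum fun i _ => sum_le_sum fun j _ => ?_
  rcases eq_or_ne i j with rfl | hij
  · rw [hdiag]
  · exact mul_le_mul_of_nonneg_left (hfg i j hij) (hk i j hij)

theorem sum_sum_mul_nonneg_of_offDiag (hk : ∀ i j, i ≠ j → 0 ≤ k i j)
    {f : ι → ι → ℝ} (hf : ∀ i j, i ≠ j → 0 ≤ f i j) (hdiag : ∀ i, f i i = 0) :
    0 ≤ ∑ i, ∑ j, k i j * f i j := by
  simpa using sum_sum_mul_le_sum_sum_mul_of_offDiag hk (f := 0) hf fun i => (hdiag i).symm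

end OffDiagonalWeights

theorem min_mul_le_of_le_add_div_two {κ A B Y : ℝ} (hκ : 0 ≤ κ) (hA : 0 ≤ A) (hB : 0 ≤ B)
    (hY : Y ≤ (A + B) / 2) : min κ 1 * Y ≤ κ / 2 * A + 1 / 2 * B := by
  have hm : 0 ≤ min κ 1 := le_min hκ zero_le_one
  calc min κ 1 * Y ≤ min κ 1 / 2 * A + min κ 1 / 2 * B := by nlinarith
    _ ≤ κ / 2 * A + 1 / 2 * B := by
      gcongr
      exacts [min_le_left κ 1, min_le_right κ 1]

/-- Coercivity of the discrete Ericksen energy (Lemma 2.1, nodal form): with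
nonnegative off-diagonal stiffness coefficients, `κ > 0`, and unit nodal directors,
the discrete Ericksen energy controls both `∫|∇u_h|²` and `∫|∇s_h|²` (in nodal form),
and hence their maximum, up to the factor `min κ 1`. -/
theorem ericksen_energy_coercive {d : ℕ} {ι : Type*} [Fintype ι]
    (k : ι → ι → ℝ) (hk : ∀ i j, i ≠ j → 0 ≤ k i j)
    (κ : ℝ) (hκ : 0 < κ) (s : ι → ℝ)
    (n : ι → EuclideanSpace ℝ (Fin d)) (hn : ∀ i, ‖n i‖ = 1) :
    min κ 1 * ((1 / 2) * ∑ i, ∑ j, k i j * ‖s i • n i - s j • n j‖ ^ 2) ≤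
        (κ / 2) * (∑ i, ∑ j, k i j * (s i - s j) ^ 2) +
          (1 / 2) * ∑ i, ∑ j, k i j * (((s i) ^ 2 + (s j) ^ 2) / 2) * ‖n i - n j‖ ^ 2 ∧
      min κ 1 * ((1 / 2) * ∑ i, ∑ j, k i j * (s i - s j) ^ 2) ≤
        (κ / 2) * (∑ i, ∑ j, k i j * (s i - s j) ^ 2) +
          (1 / 2) * ∑ i, ∑ j, k i j * (((s i) ^ 2 + (s j) ^ 2) / 2) * ‖n i - n j‖ ^ 2 ∧
      min κ 1 * max ((1 / 2) * ∑ i, ∑ j, k i j * ‖s i • n i - s j • n j‖ ^ 2)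
          ((1 / 2) * ∑ i, ∑ j, k i j * (s i - s j) ^ 2) ≤
        (κ / 2) * (∑ i, ∑ j, k i j * (s i - s j) ^ 2) +
          (1 / 2) * ∑ i, ∑ j, k i j * (((s i) ^ 2 + (s j) ^ 2) / 2) * ‖n i - n j‖ ^ 2 := by
  set U := ∑ i, ∑ j, k i j * ‖s i • n i - s j • n j‖ ^ 2
  set A := ∑ i, ∑ j, k i j * (s i - s j) ^ 2
  set B := ∑ i, ∑ j, k i j * (((s i) ^ 2 + (s j) ^ 2) / 2) * ‖n i - n j‖ ^ 2
  have hA : 0 ≤ A :=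
    sum_sum_mul_nonneg_of_offDiag hk (fun _ _ _ => sq_nonneg _) (fun _ => by simp)
  have hB : 0 ≤ B := by
    simp only [B, mul_assoc]
    exact sum_sum_mul_nonneg_of_offDiag hk (fun _ _ _ => by positivity) (fun _ => by simp)
  have hU : U ≤ A + B := by
    simp only [U, A, B, mul_assoc, ← mul_add, ← sum_add_distrib]
    exact sum_sum_mul_le_sum_sum_mul_of_offDiag hk
      (fun i j _ => norm_smul_sub_smul_sq_le_of_norm_eq_one (hn i) (hn j) _ _) (fun _ => by simp)
  have coercive : ∀ Y, Y ≤ (A + B) / 2 → min κ 1 * Y ≤ κ / 2 * A + 1 / 2 * B :=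
    fun _ => min_mul_le_of_le_add_div_two hκ.le hA hB
  have hU' : 1 / 2 * U ≤ (A + B) / 2 := by linarith
  have hA' : 1 / 2 * A ≤ (A + B) / 2 := by linarith
  exact ⟨coercive _ hU', coercive _ hA', coercive _ (max_le hU' hA')⟩
end

section
/- Let (Ω, μ) be a finite measure space, let C, Λ ≥ 0, let a_h : ℕ → Ω → ℝ and a : Ω → ℝ be measurable with 0 ≤ a_h ≤ C pointwise and a_h → a μ-almost everywhere, and let g_h : ℕ → Ω → EuclideanSpace ℝ (Fin d) and g : Ω → EuclideanSpace ℝ (Fin d) be square-integrable with ∫‖g_h‖² dμ ≤ Λ for all h and such that g_h converges weakly to g in L²(μ), i.e. ∫⟪g_h, v⟫ dμ → ∫⟪g, v⟫ dμ for every square-integrable v. Then ∫ a ‖g‖² dμ ≤ liminf_{h→∞} ∫ a_h ‖g_h‖² dμ. -/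
/-!
Expanding `a_h ‖g_h - g‖² ≥ 0` gives `a_h ‖g_h‖² ≥ 2 ⟪g_h, a_h g⟫ - a_h ‖g‖²` pointwise, so it
suffices that the integral of the right-hand side tends to `∫ a ‖g‖²`. By dominated convergence,
`∫ a_h ‖g‖² → ∫ a ‖g‖²` and `a_h g → a g` strongly in `L²`; a weakly convergent sequence bounded in
`L²` paired with a strongly convergent one converges, so `∫ ⟪g_h, a_h g⟫ → ∫ ⟪g, a g⟫ = ∫ a ‖g‖²`.
This replaces Egorov's theorem in the paper's argument.
-/

open MeasureTheory Filter Topology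
open scoped RealInnerProductSpace ENNReal

theorem Filter.Tendsto.le_liminf_of_le {ι : Type*} {l : Filter ι} [l.NeBot] {c b : ι → ℝ}
    {L M : ℝ} (hc : Tendsto c l (𝓝 L)) (hcb : ∀ᶠ n in l, c n ≤ b n) (hbM : ∀ n, b n ≤ M) :
    L ≤ liminf b l :=
  hc.liminf_eq ▸ liminf_le_liminf hcb hc.isBoundedUnder_ge (isCoboundedUnder_ge_of_le l hbM)

theorem two_mul_inner_smul_sub_le {E : Type*} [NormedAddCommGroup E] [InnerProductSpace ℝ E]
    {b : ℝ} (hb : 0 ≤ b) (u v : E) : 2 * ⟪u, b • v⟫ - b * ‖v‖ ^ 2 ≤ b * ‖u‖ ^ 2 := by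
  have h : 0 ≤ b * ‖u - v‖ ^ 2 := by positivity
  rw [norm_sub_sq_real, real_inner_smul_right] at *
  linarith

namespace MeasureTheory

variable {Ω : Type*} [MeasurableSpace Ω] {μ : Measure Ω}

theorem MemLp.bdd_smul {F : Type*} [NormedAddCommGroup F] [NormedSpace ℝ F] {p : ℝ≥0∞}
    {w : Ω → ℝ} {v : Ω → F} {C : ℝ} (hv : MemLp v p μ) (hw : AEStronglyMeasurable w μ)
    (hw_bdd : ∀ᵐ x ∂μ, ‖w x‖ ≤ C) :
    MemLp (fun x => w x • v x) p μ :=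
  hv.smul (memLp_top_of_bound hw C hw_bdd)

theorem MemLp.integrable_mul_norm_sq {F : Type*} [NormedAddCommGroup F] {w : Ω → ℝ}
    {v : Ω → F} {C : ℝ} (hv : MemLp v 2 μ) (hw : AEStronglyMeasurable w μ)
    (hw_bdd : ∀ᵐ x ∂μ, ‖w x‖ ≤ C) :
    Integrable (fun x => w x * ‖v x‖ ^ 2) μ :=
  (hv.integrable_norm_pow two_ne_zero).bdd_mul hw hw_bdd

theorem integral_mul_norm_sq_le_mul {F : Type*} [NormedAddCommGroup F] {w : Ω → ℝ}
    {v : Ω → F} {C : ℝ} (hv : MemLp v 2 μ) (hw : AEStronglyMeasurable w μ)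
    (hw_bdd : ∀ᵐ x ∂μ, ‖w x‖ ≤ C) :
    ∫ x, w x * ‖v x‖ ^ 2 ∂μ ≤ C * ∫ x, ‖v x‖ ^ 2 ∂μ := by
  rw [← integral_const_mul]
  refine integral_mono_ae (hv.integrable_mul_norm_sq hw hw_bdd)
    ((hv.integrable_norm_pow two_ne_zero).const_mul C) ?_
  filter_upwards [hw_bdd] with x hx
  exact mul_le_mul_of_nonneg_right (le_of_abs_le hx) (sq_nonneg _)

variable {E : Type*} [NormedAddCommGroup E] [InnerProductSpace ℝ E]

theorem MemLp.integral_inner_eq_inner_toLp {f g : Ω → E} (hf : MemLp f 2 μ) (hg : MemLp g 2 μ) :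
    ∫ x, ⟪f x, g x⟫ ∂μ = ⟪hf.toLp f, hg.toLp g⟫ := by
  rw [L2.inner_def]
  refine integral_congr_ae ?_
  filter_upwards [hf.coeFn_toLp, hg.coeFn_toLp] with x hfx hgx
  rw [hfx, hgx]

theorem MemLp.integrable_inner {f g : Ω → E} (hf : MemLp f 2 μ) (hg : MemLp g 2 μ) :
    Integrable (fun x => ⟪f x, g x⟫) μ := by
  refine (L2.integrable_inner (hf.toLp f) (hg.toLp g)).congr ?_
  filter_upwards [hf.coeFn_toLp, hg.coeFn_toLp] with x hfx hgx
  rw [hfx, hgx]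

theorem MemLp.integral_norm_sq_eq_norm_toLp_sq {f : Ω → E} (hf : MemLp f 2 μ) :
    ∫ x, ‖f x‖ ^ 2 ∂μ = ‖hf.toLp f‖ ^ 2 := by
  simp_rw [← real_inner_self_eq_norm_sq]
  exact hf.integral_inner_eq_inner_toLp hf

theorem abs_integral_inner_le_sqrt_mul_sqrt {f g : Ω → E} (hf : MemLp f 2 μ) (hg : MemLp g 2 μ) :
    |∫ x, ⟪f x, g x⟫ ∂μ| ≤ √(∫ x, ‖f x‖ ^ 2 ∂μ) * √(∫ x, ‖g x‖ ^ 2 ∂μ) := by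
  rw [hf.integral_inner_eq_inner_toLp hg, hf.integral_norm_sq_eq_norm_toLp_sq,
    hg.integral_norm_sq_eq_norm_toLp_sq, Real.sqrt_sq (norm_nonneg _),
    Real.sqrt_sq (norm_nonneg _)]
  exact abs_real_inner_le_norm _ _

theorem two_mul_integral_inner_smul_sub_le {b : Ω → ℝ} {u v : Ω → E} {C : ℝ}
    (hb : AEStronglyMeasurable b μ) (hb_nonneg : ∀ x, 0 ≤ b x) (hb_bdd : ∀ᵐ x ∂μ, ‖b x‖ ≤ C)
    (hu : MemLp u 2 μ) (hv : MemLp v 2 μ) :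
    2 * ∫ x, ⟪u x, b x • v x⟫ ∂μ - ∫ x, b x * ‖v x‖ ^ 2 ∂μ ≤ ∫ x, b x * ‖u x‖ ^ 2 ∂μ := by
  have huv := (hu.integrable_inner (hv.bdd_smul hb hb_bdd)).const_mul 2
  have hv' := hv.integrable_mul_norm_sq hb hb_bdd
  rw [← integral_const_mul, ← integral_sub huv hv']
  exact integral_mono (huv.sub hv') (hu.integrable_mul_norm_sq hb hb_bdd) fun x =>
    two_mul_inner_smul_sub_le (hb_nonneg x) _ _

theorem tendsto_integral_mul_of_tendsto_ae {w : ℕ → Ω → ℝ} {w₀ F : Ω → ℝ} {C : ℝ}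
    (hw : ∀ n, AEStronglyMeasurable (w n) μ) (hw_bdd : ∀ n, ∀ᵐ x ∂μ, ‖w n x‖ ≤ C)
    (hw_lim : ∀ᵐ x ∂μ, Tendsto (fun n => w n x) atTop (𝓝 (w₀ x))) (hF : Integrable F μ) :
    Tendsto (fun n => ∫ x, w n x * F x ∂μ) atTop (𝓝 (∫ x, w₀ x * F x ∂μ)) := by
  refine tendsto_integral_of_dominated_convergence (fun x => C * ‖F x‖)
    (fun n => (hw n).mul hF.1) (hF.norm.const_mul C) (fun n => ?_) ?_
  · filter_upwards [hw_bdd n] with x hx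
    rw [norm_mul]
    gcongr
  · filter_upwards [hw_lim] with x hx
    exact hx.mul_const _

theorem tendsto_integral_norm_smul_sub_smul_sq {w : ℕ → Ω → ℝ} {w₀ : Ω → ℝ} {v : Ω → E} {C : ℝ}
    (hw : ∀ n, AEStronglyMeasurable (w n) μ) (hw₀ : AEStronglyMeasurable w₀ μ)
    (hw_bdd : ∀ n, ∀ᵐ x ∂μ, ‖w n x‖ ≤ C)
    (hw_lim : ∀ᵐ x ∂μ, Tendsto (fun n => w n x) atTop (𝓝 (w₀ x))) (hv : MemLp v 2 μ) :
    Tendsto (fun n => ∫ x, ‖w n x • v x - w₀ x • v x‖ ^ 2 ∂μ) atTop (𝓝 0) := by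
  have hdiff_bdd : ∀ n, ∀ᵐ x ∂μ, ‖(w n x - w₀ x) ^ 2‖ ≤ (C + C) ^ 2 := fun n => by
    filter_upwards [hw_bdd n, ae_all_iff.2 hw_bdd, hw_lim] with x hx hx_all hx_lim
    rw [norm_pow]
    gcongr
    exact (norm_sub_le _ _).trans (add_le_add hx (le_of_tendsto' hx_lim.norm hx_all))
  have hdiff_lim : ∀ᵐ x ∂μ, Tendsto (fun n => (w n x - w₀ x) ^ 2) atTop (𝓝 0) := by
    filter_upwards [hw_lim] with x hx
    simpa using (hx.sub_const (w₀ x)).pow 2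
  have h := tendsto_integral_mul_of_tendsto_ae (fun n => ((hw n).sub hw₀).pow 2) hdiff_bdd
    hdiff_lim (hv.integrable_norm_pow two_ne_zero)
  simpa [← sub_smul, norm_smul, mul_pow] using h

theorem tendsto_integral_inner_of_tendsto_of_tendsto_integral_norm_sub_sq
    {u : ℕ → Ω → E} {u₀ : Ω → E} {v : ℕ → Ω → E} {v₀ : Ω → E} {Λ : ℝ}
    (hu : ∀ n, MemLp (u n) 2 μ) (hu_bdd : ∀ n, ∫ x, ‖u n x‖ ^ 2 ∂μ ≤ Λ)
    (hu_lim : Tendsto (fun n => ∫ x, ⟪u n x, v₀ x⟫ ∂μ) atTop (𝓝 (∫ x, ⟪u₀ x, v₀ x⟫ ∂μ)))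
    (hv : ∀ n, MemLp (v n) 2 μ) (hv₀ : MemLp v₀ 2 μ)
    (hv_lim : Tendsto (fun n => ∫ x, ‖v n x - v₀ x‖ ^ 2 ∂μ) atTop (𝓝 0)) :
    Tendsto (fun n => ∫ x, ⟪u n x, v n x⟫ ∂μ) atTop (𝓝 (∫ x, ⟪u₀ x, v₀ x⟫ ∂μ)) := by
  have hdiff : ∀ n, MemLp (fun x => v n x - v₀ x) 2 μ := fun n => (hv n).sub hv₀
  have hsplit : ∀ n, ∫ x, ⟪u n x, v n x⟫ ∂μ
      = ∫ x, ⟪u n x, v₀ x⟫ ∂μ + ∫ x, ⟪u n x, v n x - v₀ x⟫ ∂μ := fun n => by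
    rw [← integral_add ((hu n).integrable_inner hv₀) ((hu n).integrable_inner (hdiff n))]
    simp_rw [inner_sub_right, add_sub_cancel]
  have herr_bdd : ∀ n, |∫ x, ⟪u n x, v n x - v₀ x⟫ ∂μ|
      ≤ √Λ * √(∫ x, ‖v n x - v₀ x‖ ^ 2 ∂μ) := fun n =>
    (abs_integral_inner_le_sqrt_mul_sqrt (hu n) (hdiff n)).trans (by gcongr; exact hu_bdd n)
  have herr : Tendsto (fun n => ∫ x, ⟪u n x, v n x - v₀ x⟫ ∂μ) atTop (𝓝 0) := by
    refine squeeze_zero_norm herr_bdd ?_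
    simpa using ((Real.continuous_sqrt.tendsto 0).comp hv_lim).const_mul √Λ
  simpa [hsplit] using hu_lim.add herr

theorem tendsto_integral_inner_smul_of_weak {u : ℕ → Ω → E} {u₀ v : Ω → E} {w : ℕ → Ω → ℝ}
    {w₀ : Ω → ℝ} {C Λ : ℝ} (hu : ∀ n, MemLp (u n) 2 μ) (hu_bdd : ∀ n, ∫ x, ‖u n x‖ ^ 2 ∂μ ≤ Λ)
    (hu_weak : ∀ v' : Ω → E, MemLp v' 2 μ →
      Tendsto (fun n => ∫ x, ⟪u n x, v' x⟫ ∂μ) atTop (𝓝 (∫ x, ⟪u₀ x, v' x⟫ ∂μ)))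
    (hw : ∀ n, AEStronglyMeasurable (w n) μ) (hw₀ : AEStronglyMeasurable w₀ μ)
    (hw_bdd : ∀ n, ∀ᵐ x ∂μ, ‖w n x‖ ≤ C)
    (hw_lim : ∀ᵐ x ∂μ, Tendsto (fun n => w n x) atTop (𝓝 (w₀ x))) (hv : MemLp v 2 μ) :
    Tendsto (fun n => ∫ x, ⟪u n x, w n x • v x⟫ ∂μ) atTop (𝓝 (∫ x, ⟪u₀ x, w₀ x • v x⟫ ∂μ)) := by
  have hw₀_bdd : ∀ᵐ x ∂μ, ‖w₀ x‖ ≤ C := by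
    filter_upwards [ae_all_iff.2 hw_bdd, hw_lim] with x hx hx_lim
    exact le_of_tendsto' hx_lim.norm hx
  have hw₀v := hv.bdd_smul hw₀ hw₀_bdd
  exact tendsto_integral_inner_of_tendsto_of_tendsto_integral_norm_sub_sq hu hu_bdd
    (hu_weak _ hw₀v) (fun n => hv.bdd_smul (hw n) (hw_bdd n)) hw₀v
    (tendsto_integral_norm_smul_sub_smul_sq hw hw₀ hw_bdd hw_lim hv)

end MeasureTheory

theorem weighted_l2_weak_liminf_general {Ω : Type*} [MeasurableSpace Ω]
    (μ : Measure Ω) {d : ℕ}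
    (C Λ : ℝ) (hC : 0 ≤ C)
    (ah : ℕ → Ω → ℝ) (a : Ω → ℝ)
    (hah_meas : ∀ h, Measurable (ah h)) (ha_meas : Measurable a)
    (hah_bdd : ∀ h x, 0 ≤ ah h x ∧ ah h x ≤ C)
    (hah_ae : ∀ᵐ x ∂μ, Tendsto (fun h => ah h x) atTop (nhds (a x)))
    (gh : ℕ → Ω → EuclideanSpace ℝ (Fin d)) (g : Ω → EuclideanSpace ℝ (Fin d))
    (hgh_L2 : ∀ h, MemLp (gh h) 2 μ) (hg_L2 : MemLp g 2 μ)
    (hgh_bdd : ∀ h, ∫ x, ‖gh h x‖ ^ 2 ∂μ ≤ Λ)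
    (hweak : ∀ v : Ω → EuclideanSpace ℝ (Fin d), MemLp v 2 μ →
      Tendsto (fun h => ∫ x, ⟪gh h x, v x⟫ ∂μ) atTop (nhds (∫ x, ⟪g x, v x⟫ ∂μ))) :
    ∫ x, a x * ‖g x‖ ^ 2 ∂μ ≤
      liminf (fun h => ∫ x, ah h x * ‖gh h x‖ ^ 2 ∂μ) atTop := by
  have hah : ∀ n, AEStronglyMeasurable (ah n) μ := fun n => (hah_meas n).aestronglyMeasurable
  have hah_norm : ∀ n, ∀ᵐ x ∂μ, ‖ah n x‖ ≤ C := fun n => ae_of_all _ fun x => by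
    simpa [abs_of_nonneg (hah_bdd n x).1] using (hah_bdd n x).2
  have hcross : Tendsto (fun n => ∫ x, ⟪gh n x, ah n x • g x⟫ ∂μ) atTop
      (𝓝 (∫ x, a x * ‖g x‖ ^ 2 ∂μ)) := by
    simpa only [real_inner_smul_right, real_inner_self_eq_norm_sq] using
      tendsto_integral_inner_smul_of_weak hgh_L2 hgh_bdd hweak hah ha_meas.aestronglyMeasurable
        hah_norm hah_ae hg_L2
  have hweight : Tendsto (fun n => ∫ x, ah n x * ‖g x‖ ^ 2 ∂μ) atTop
      (𝓝 (∫ x, a x * ‖g x‖ ^ 2 ∂μ)) :=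
    tendsto_integral_mul_of_tendsto_ae hah hah_norm hah_ae (hg_L2.integrable_norm_pow two_ne_zero)
  have hlower : ∀ n, 2 * ∫ x, ⟪gh n x, ah n x • g x⟫ ∂μ - ∫ x, ah n x * ‖g x‖ ^ 2 ∂μ
      ≤ ∫ x, ah n x * ‖gh n x‖ ^ 2 ∂μ := fun n =>
    two_mul_integral_inner_smul_sub_le (hah n) (fun x => (hah_bdd n x).1) (hah_norm n)
      (hgh_L2 n) hg_L2
  have hupper : ∀ n, ∫ x, ah n x * ‖gh n x‖ ^ 2 ∂μ ≤ C * Λ := fun n =>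
    (integral_mul_norm_sq_le_mul (hgh_L2 n) (hah n) (hah_norm n)).trans
      (mul_le_mul_of_nonneg_left (hgh_bdd n) hC)
  refine Tendsto.le_liminf_of_le ?_ (Eventually.of_forall hlower) hupper
  simpa only [two_mul, add_sub_cancel_right] using (hcross.const_mul 2).sub hweight

/-- Egorov-based weak lower semicontinuity (Part 1 of Theorem 6.1): if `0 ≤ a_h ≤ C`
converge a.e. to `a`, and `g_h ⇀ g` weakly in `L²(μ)` with `∫‖g_h‖² ≤ Λ`, then
`∫ a‖g‖² ≤ liminf ∫ a_h‖g_h‖²`. -/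
theorem weighted_l2_weak_liminf {Ω : Type*} [MeasurableSpace Ω]
    (μ : Measure Ω) [IsFiniteMeasure μ] {d : ℕ}
    (C Λ : ℝ) (hC : 0 ≤ C) (hΛ : 0 ≤ Λ)
    (ah : ℕ → Ω → ℝ) (a : Ω → ℝ)
    (hah_meas : ∀ h, Measurable (ah h)) (ha_meas : Measurable a)
    (hah_bdd : ∀ h x, 0 ≤ ah h x ∧ ah h x ≤ C)
    (hah_ae : ∀ᵐ x ∂μ, Tendsto (fun h => ah h x) atTop (nhds (a x)))
    (gh : ℕ → Ω → EuclideanSpace ℝ (Fin d)) (g : Ω → EuclideanSpace ℝ (Fin d))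
    (hgh_L2 : ∀ h, MemLp (gh h) 2 μ) (hg_L2 : MemLp g 2 μ)
    (hgh_bdd : ∀ h, ∫ x, ‖gh h x‖ ^ 2 ∂μ ≤ Λ)
    (hweak : ∀ v : Ω → EuclideanSpace ℝ (Fin d), MemLp v 2 μ →
      Tendsto (fun h => ∫ x, ⟪gh h x, v x⟫ ∂μ) atTop (nhds (∫ x, ⟪g x, v x⟫ ∂μ))) :
    ∫ x, a x * ‖g x‖ ^ 2 ∂μ ≤
      liminf (fun h => ∫ x, ah h x * ‖gh h x‖ ^ 2 ∂μ) atTop :=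
  weighted_l2_weak_liminf_general μ C Λ hC ah a hah_meas ha_meas hah_bdd hah_ae gh g hgh_L2 hg_L2
    hgh_bdd hweak
end
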